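/- For every δ ∈ (0,1) there exists a constant C = C(δ) > 0 such that for every natural number n and every (u1,u2) ∈ Γ with u1 > 0 and u2 > 0: | (1/A_n^δ) · Σ_{k=0}^{n} A_{n−k}^{δ−1} · H*_{k,1}(u1,u2) | ≤ C · (1/u1²) · ( 1/((n+1)^δ · u2^δ) + 1/((n+1) · u2) ). -/

import Mathlib

open MeasureTheory Finset

/-- The triangle `Γ = {(u₁,u₂) : 0 ≤ u₂ ≤ u₁/3, 0 ≤ u₁ ≤ 1}`. -/
def GammaT : Set (ℝ × ℝ) := {u | 0 ≤ u.2 ∧ u.2 ≤ u.1 / 3 ∧ 0 ≤ u.1 ∧ u.1 ≤ 1}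

open Finset in
/-- Cesàro numbers: `A_n^δ = (δ+1)(δ+2)⋯(δ+n)/n!`, with `A_0^δ = 1`. -/
noncomputable def cesaroA (δ : ℝ) (n : ℕ) : ℝ :=
  (∏ i ∈ Finset.range n, (δ + i + 1)) / n.factorial

/-- The function `H*_{k,1}`. -/
noncomputable def Hstar1 (k : ℕ) (u : ℝ × ℝ) : ℝ :=
  (1 / 2) * Real.cos ((2 * (k : ℝ) + 1) * Real.pi * u.2) /
    (Real.sin (Real.pi * (u.1 + u.2) / 2) * Real.sin (Real.pi * (u.1 - u.2) / 2))

/-!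
On `Γ` the denominator of `H*_{k,1}` is `sin²(πu₁/2) - sin²(πu₂/2) ≥ u₁²/2`, so it suffices to bound
`|∑ₖ A_{n-k}^{δ-1} cos((2k+1)πv)| ≤ (3/δ) v^{-δ}` and divide by `A_n^δ ≥ (n+1)^δ`.
Reversing the order of summation turns the sum into `∑ₘ A_m^{δ-1} cos(α + 2πmv)`, which we split
at `N = ⌊1/v⌋`. The head is at most `∑_{m ≤ N} A_m^{δ-1} = A_N^δ ≤ (N+1)^δ/δ ≤ 2v^{-δ}/δ`. On the
tail the weights `A_m^{δ-1}` decrease, so Abel summation against the Dirichlet kernel bound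
`|∑ₘ cos(α + mβ)| ≤ 1/|sin(β/2)|` gives at most
`A_{N+1}^{δ-1}/sin(πv) ≤ (N+2)^{δ-1}/(2v) ≤ v^{-δ}/2`.
-/

open Real

lemma one_add_mul_le_rpow_one_add {s : ℝ} (hs : -1 < s) {p : ℝ} (hp0 : -1 ≤ p) (hp1 : p ≤ 0) :
    1 + p * s ≤ (1 + s) ^ p := by
  have hpos : 0 < 1 + s := by linarith
  have hber : (1 + s) ^ (-p) ≤ 1 + -p * s :=
    rpow_one_add_le_one_add_mul_self hs.le (by linarith) (by linarith)
  have hq : 0 < 1 - p * s := by linarith [rpow_pos_of_pos hpos (-p)]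
  calc 1 + p * s ≤ (1 - p * s)⁻¹ := by
        rw [← one_div, le_div_iff₀ hq]
        nlinarith [sq_nonneg (p * s)]
    _ ≤ ((1 + s) ^ (-p))⁻¹ := inv_anti₀ (rpow_pos_of_pos hpos _) (by linarith)
    _ = (1 + s) ^ p := by rw [rpow_neg hpos.le, inv_inv]

lemma mul_rpow_sub_one_le_rpow_sub_rpow {p : ℝ} (hp0 : 0 ≤ p) (hp1 : p ≤ 1) {x : ℝ}
    (hx : 1 ≤ x) : p * x ^ (p - 1) ≤ x ^ p - (x - 1) ^ p := by
  have hx0 : 0 < x := by linarith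
  have hber : (1 + -x⁻¹) ^ p ≤ 1 + p * -x⁻¹ :=
    rpow_one_add_le_one_add_mul_self (by linarith [inv_le_one_of_one_le₀ hx]) hp0 hp1
  have hsplit : (x - 1) ^ p = x ^ p * (1 + -x⁻¹) ^ p := by
    rw [← mul_rpow hx0.le (by linarith [inv_le_one_of_one_le₀ hx])]
    congr 1
    field_simp
    ring
  have hpow : x ^ (p - 1) = x ^ p * x⁻¹ := by rw [rpow_sub_one hx0.ne', div_eq_mul_inv]
  rw [hsplit, hpow]
  nlinarith [rpow_pos_of_pos hx0 p]

lemma cesaroA_zero (δ : ℝ) : cesaroA δ 0 = 1 := by simp [cesaroA]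

lemma cesaroA_succ (δ : ℝ) (n : ℕ) :
    cesaroA δ (n + 1) = cesaroA δ n * ((δ + n + 1) / (n + 1)) := by
  simp only [cesaroA, prod_range_succ, Nat.factorial_succ]
  push_cast
  rw [div_mul_div_comm, mul_comm ((n : ℝ) + 1)]

lemma cesaroA_nonneg {δ : ℝ} (hδ : -1 ≤ δ) (n : ℕ) : 0 ≤ cesaroA δ n :=
  div_nonneg (prod_nonneg fun i _ => by linarith [(i.cast_nonneg : (0 : ℝ) ≤ i)])
    (by positivity)

lemma cesaroA_sub_one_succ (δ : ℝ) (n : ℕ) :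
    cesaroA (δ - 1) (n + 1) = cesaroA δ n * (δ / (n + 1)) := by
  simp only [cesaroA, prod_range_succ', Nat.factorial_succ]
  push_cast
  rw [div_mul_div_comm, mul_comm ((n : ℝ) + 1)]
  congr 1
  rw [prod_congr rfl fun (i : ℕ) _ => show δ - 1 + ((i : ℝ) + 1) + 1 = δ + i + 1 by ring]
  ring

lemma cesaroA_succ_eq_add (δ : ℝ) (n : ℕ) :
    cesaroA δ (n + 1) = cesaroA δ n + cesaroA (δ - 1) (n + 1) := by
  rw [cesaroA_succ, cesaroA_sub_one_succ]
  field_simp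
  ring

lemma sum_range_cesaroA_sub_one (δ : ℝ) (n : ℕ) :
    ∑ k ∈ range (n + 1), cesaroA (δ - 1) k = cesaroA δ n := by
  induction n with
  | zero => simp [cesaroA_zero]
  | succ n ih => rw [sum_range_succ, ih, (cesaroA_succ_eq_add δ n).symm]

lemma antitone_cesaroA {γ : ℝ} (hγ0 : -1 ≤ γ) (hγ1 : γ ≤ 0) : Antitone (cesaroA γ) := by
  refine antitone_nat_of_succ_le fun n => ?_
  rw [cesaroA_succ]
  refine mul_le_of_le_one_right (cesaroA_nonneg hγ0 n) ?_
  rw [div_le_one (by positivity)]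
  linarith

lemma rpow_le_cesaroA {δ : ℝ} (hδ0 : 0 ≤ δ) (hδ1 : δ ≤ 1) (n : ℕ) :
    ((n : ℝ) + 1) ^ δ ≤ cesaroA δ n := by
  induction n with
  | zero => simp [cesaroA_zero]
  | succ n ih =>
    have hn : (0 : ℝ) < n + 1 := by positivity
    have hratio : (((n : ℝ) + 1 + 1) / (n + 1)) ^ δ ≤ (δ + n + 1) / (n + 1) := by
      have h := rpow_one_add_le_one_add_mul_self (s := ((n : ℝ) + 1)⁻¹) (by
        linarith [inv_pos.2 hn]) hδ0 hδ1
      convert h using 1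
      · congr 1; field_simp
      · field_simp; ring
    rw [cesaroA_succ]
    push_cast
    calc ((n : ℝ) + 1 + 1) ^ δ = ((n : ℝ) + 1) ^ δ * (((n : ℝ) + 1 + 1) / (n + 1)) ^ δ := by
          rw [← mul_rpow hn.le (by positivity), mul_div_cancel₀ _ hn.ne']
      _ ≤ cesaroA δ n * ((δ + n + 1) / (n + 1)) :=
          mul_le_mul ih hratio (by positivity) (by linarith [rpow_pos_of_pos hn δ])

lemma cesaroA_le_rpow {γ : ℝ} (hγ0 : -1 ≤ γ) (hγ1 : γ ≤ 0) (n : ℕ) :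
    cesaroA γ n ≤ ((n : ℝ) + 1) ^ γ := by
  induction n with
  | zero => simp [cesaroA_zero]
  | succ n ih =>
    have hn : (0 : ℝ) < n + 1 := by positivity
    have hratio : (γ + n + 1) / (n + 1) ≤ (((n : ℝ) + 1 + 1) / (n + 1)) ^ γ := by
      have h := one_add_mul_le_rpow_one_add (s := ((n : ℝ) + 1)⁻¹) (by
        linarith [inv_pos.2 hn]) hγ0 hγ1
      convert h using 1
      · field_simp; ring
      · congr 1; field_simp
    rw [cesaroA_succ]
    push_cast
    calc cesaroA γ n * ((γ + n + 1) / (n + 1))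
        ≤ ((n : ℝ) + 1) ^ γ * (((n : ℝ) + 1 + 1) / (n + 1)) ^ γ :=
          mul_le_mul ih hratio (div_nonneg (by linarith) hn.le) (rpow_nonneg hn.le _)
      _ = ((n : ℝ) + 1 + 1) ^ γ := by
          rw [← mul_rpow hn.le (by positivity), mul_div_cancel₀ _ hn.ne']

lemma cesaroA_le_rpow_div {δ : ℝ} (hδ0 : 0 < δ) (hδ1 : δ ≤ 1) (n : ℕ) :
    cesaroA δ n ≤ ((n : ℝ) + 1) ^ δ / δ := by
  induction n with
  | zero => simpa [cesaroA_zero] using one_le_one_div hδ0 hδ1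
  | succ n ih =>
    have hconc := mul_rpow_sub_one_le_rpow_sub_rpow hδ0.le hδ1 (x := (n : ℝ) + 1 + 1)
      (by linarith [(n.cast_nonneg : (0 : ℝ) ≤ n)])
    have hterm := cesaroA_le_rpow (γ := δ - 1) (by linarith) (by linarith) (n + 1)
    rw [cesaroA_succ_eq_add, le_div_iff₀ hδ0]
    rw [le_div_iff₀ hδ0] at ih
    push_cast at hterm ⊢
    rw [add_sub_cancel_right] at hconc
    nlinarith

lemma abs_sum_mul_le_of_antitone {f : ℕ → ℝ} (hf : Antitone f) (hf0 : ∀ i, 0 ≤ f i)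
    {g : ℕ → ℝ} {M : ℝ} (hg : ∀ j, |∑ m ∈ range j, g m| ≤ M) (L : ℕ) :
    |∑ m ∈ range L, f m * g m| ≤ f 0 * M := by
  have hM : 0 ≤ M := (abs_nonneg _).trans (hg 0)
  cases L with
  | zero => simpa using mul_nonneg (hf0 0) hM
  | succ n =>
    have hparts := sum_range_by_parts f g (n + 1)
    simp only [smul_eq_mul, Nat.add_sub_cancel] at hparts
    have hincr : ∀ i, |(f (i + 1) - f i) * ∑ j ∈ range (i + 1), g j| ≤ (f i - f (i + 1)) * M :=
      fun i => by
        rw [abs_mul, abs_sub_comm, abs_of_nonneg (sub_nonneg.2 (hf i.le_succ))]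
        exact mul_le_mul_of_nonneg_left (hg _) (sub_nonneg.2 (hf i.le_succ))
    have hlast : |f n * ∑ i ∈ range (n + 1), g i| ≤ f n * M := by
      rw [abs_mul, abs_of_nonneg (hf0 n)]
      exact mul_le_mul_of_nonneg_left (hg _) (hf0 n)
    calc |∑ m ∈ range (n + 1), f m * g m|
        ≤ |f n * ∑ i ∈ range (n + 1), g i| +
            ∑ i ∈ range n, |(f (i + 1) - f i) * ∑ j ∈ range (i + 1), g j| := by
          rw [hparts]
          exact (abs_sub _ _).trans (add_le_add le_rfl (abs_sum_le_sum_abs _ _))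
      _ ≤ f n * M + ∑ i ∈ range n, (f i - f (i + 1)) * M :=
          add_le_add hlast (sum_le_sum fun i _ => hincr i)
      _ = f 0 * M := by rw [← sum_mul, sum_range_sub' f]; ring

lemma abs_sin_mul_abs_sum_range_cos_le (α β : ℝ) (j : ℕ) :
    |sin (β / 2)| * |∑ m ∈ range j, cos (α + m * β)| ≤ 1 := by
  set F : ℕ → ℝ := fun m => sin (α + m * β - β / 2)
  have htel : ∀ m : ℕ, 2 * sin (β / 2) * cos (α + m * β) = F (m + 1) - F m := fun m => by
    simp only [F, Nat.cast_succ, add_mul, one_mul]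
    rw [show α + (m * β + β) - β / 2 = α + m * β + β / 2 by ring, sin_add, sin_sub]
    ring
  have hsum : 2 * sin (β / 2) * ∑ m ∈ range j, cos (α + m * β) = F j - F 0 := by
    rw [mul_sum, sum_congr rfl fun m _ => htel m, sum_range_sub]
  have h2 : |F j - F 0| ≤ 2 :=
    ((abs_sub _ _).trans (add_le_add (abs_sin_le_one _) (abs_sin_le_one _))).trans_eq
      one_add_one_eq_two
  rw [← hsum, abs_mul, abs_mul, abs_two] at h2
  linarith

lemma abs_sum_antitone_mul_cos_le {a : ℕ → ℝ} (ha : Antitone a) (ha0 : ∀ i, 0 ≤ a i)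
    (α : ℝ) {β : ℝ} (hβ : sin (β / 2) ≠ 0) (L : ℕ) :
    |∑ m ∈ range L, a m * cos (α + m * β)| ≤ a 0 / |sin (β / 2)| := by
  have hs : 0 < |sin (β / 2)| := abs_pos.2 hβ
  refine (abs_sum_mul_le_of_antitone ha ha0 (fun j => ?_) L).trans_eq (mul_one_div _ _)
  rw [le_div_iff₀ hs, mul_comm]
  exact abs_sin_mul_abs_sum_range_cos_le α β j

lemma abs_sum_cesaroA_mul_le {δ : ℝ} (hδ : 0 ≤ δ) {g : ℕ → ℝ} (hg : ∀ m, |g m| ≤ 1) (n : ℕ) :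
    |∑ m ∈ range (n + 1), cesaroA (δ - 1) m * g m| ≤ cesaroA δ n := by
  have hA : ∀ m, 0 ≤ cesaroA (δ - 1) m := cesaroA_nonneg (by linarith)
  calc |∑ m ∈ range (n + 1), cesaroA (δ - 1) m * g m|
      ≤ ∑ m ∈ range (n + 1), |cesaroA (δ - 1) m * g m| := abs_sum_le_sum_abs _ _
    _ ≤ ∑ m ∈ range (n + 1), cesaroA (δ - 1) m := sum_le_sum fun m _ => by
        rw [abs_mul, abs_of_nonneg (hA m)]
        exact mul_le_of_le_one_right (hA m) (hg m)
    _ = cesaroA δ n := sum_range_cesaroA_sub_one δ n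

lemma abs_sum_cesaroA_mul_cos_le {δ : ℝ} (hδ0 : 0 < δ) (hδ1 : δ ≤ 1) {v : ℝ} (hv0 : 0 < v)
    (hv1 : v ≤ 1 / 2) (α : ℝ) (n : ℕ) :
    |∑ m ∈ range (n + 1), cesaroA (δ - 1) m * cos (α + m * (2 * π * v))| ≤ 3 / δ / v ^ δ := by
  set N := ⌊v⁻¹⌋₊
  have hN : (N : ℝ) ≤ v⁻¹ := Nat.floor_le (by positivity)
  have hN' : v⁻¹ < N + 1 := Nat.lt_floor_add_one _
  have hv_inv : 1 ≤ v⁻¹ := one_le_inv₀ hv0 |>.2 (by linarith)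
  have hhead : ∀ K ≤ N, |∑ m ∈ range (K + 1), cesaroA (δ - 1) m * cos (α + m * (2 * π * v))|
      ≤ 2 / δ / v ^ δ := fun K hK => by
    have hK' : (K : ℝ) + 1 ≤ 2 * v⁻¹ := by
      have : (K : ℝ) ≤ N := by exact_mod_cast hK
      linarith
    calc _ ≤ cesaroA δ K := abs_sum_cesaroA_mul_le hδ0.le (fun m => abs_cos_le_one _) K
      _ ≤ ((K : ℝ) + 1) ^ δ / δ := cesaroA_le_rpow_div hδ0 hδ1 K
      _ ≤ (2 * v⁻¹) ^ δ / δ := by gcongr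
      _ = 2 ^ δ / δ / v ^ δ := by rw [mul_rpow zero_le_two (by positivity), inv_rpow hv0.le]; ring
      _ ≤ 2 / δ / v ^ δ := by
          gcongr
          exact (rpow_le_rpow_of_exponent_le one_le_two hδ1).trans_eq (rpow_one 2)
  rcases le_or_gt n N with hnN | hNn
  · exact (hhead n hnN).trans (by gcongr; norm_num)
  have hsin : 2 * v ≤ |sin (2 * π * v / 2)| := by
    have hpv : 0 ≤ π * v := by positivity
    have hpv' : π * v ≤ π / 2 := by nlinarith [pi_pos]
    rw [show 2 * π * v / 2 = π * v by ring, abs_of_nonneg (sin_nonneg_of_nonneg_of_le_pi hpv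
      (by linarith [pi_pos]))]
    convert mul_le_sin hpv hpv' using 1
    field_simp
  have htail : |∑ m ∈ Ico (N + 1) (n + 1), cesaroA (δ - 1) m * cos (α + m * (2 * π * v))|
      ≤ 1 / 2 / v ^ δ := by
    have hβ : sin (2 * π * v / 2) ≠ 0 := abs_pos.1 (by linarith)
    have ha : Antitone fun i => cesaroA (δ - 1) (N + 1 + i) :=
      (antitone_cesaroA (by linarith) (by linarith)).comp_monotone fun i j h => by omega
    have hfirst : cesaroA (δ - 1) (N + 1 + 0) ≤ v / v ^ δ :=
      calc _ ≤ (((N + 1 + 0 : ℕ) : ℝ) + 1) ^ (δ - 1) :=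
            cesaroA_le_rpow (by linarith) (by linarith) _
        _ ≤ v⁻¹ ^ (δ - 1) := rpow_le_rpow_of_nonpos (by positivity) (by push_cast; linarith)
            (by linarith)
        _ = v / v ^ δ := by rw [inv_rpow hv0.le, rpow_sub_one hv0.ne']; field_simp
    rw [sum_Ico_eq_sum_range]
    calc _ = |∑ i ∈ range (n + 1 - (N + 1)), cesaroA (δ - 1) (N + 1 + i) *
            cos ((α + (N + 1 : ℕ) * (2 * π * v)) + i * (2 * π * v))| := by
          congr 1
          refine sum_congr rfl fun i _ => ?_
          push_cast
          ring_nf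
      _ ≤ cesaroA (δ - 1) (N + 1 + 0) / |sin (2 * π * v / 2)| :=
          abs_sum_antitone_mul_cos_le ha (fun i => cesaroA_nonneg (by linarith) _) _ hβ _
      _ ≤ v / v ^ δ / (2 * v) := by gcongr
      _ = 1 / 2 / v ^ δ := by field_simp
  have hδ_half : 2 / δ + 1 / 2 ≤ 3 / δ := by
    rw [div_add' _ _ _ hδ0.ne', div_le_div_iff_of_pos_right hδ0]
    linarith
  rw [← sum_range_add_sum_Ico _ (by omega : N + 1 ≤ n + 1)]
  calc _ ≤ 2 / δ / v ^ δ + 1 / 2 / v ^ δ :=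
        (abs_add_le _ _).trans (add_le_add (hhead N le_rfl) htail)
    _ ≤ 3 / δ / v ^ δ := by rw [← add_div]; gcongr

lemma abs_sum_cesaroA_rev_mul_cos_odd_le {δ : ℝ} (hδ0 : 0 < δ) (hδ1 : δ ≤ 1) {v : ℝ}
    (hv0 : 0 < v) (hv1 : v ≤ 1 / 2) (n : ℕ) :
    |∑ k ∈ range (n + 1), cesaroA (δ - 1) (n - k) * cos ((2 * k + 1) * π * v)|
      ≤ 3 / δ / v ^ δ := by
  rw [← sum_range_reflect]
  convert abs_sum_cesaroA_mul_cos_le hδ0 hδ1 hv0 hv1 (-((2 * n + 1) * π * v)) n using 3 with m hm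
  have hmn : m ≤ n := Nat.lt_succ_iff.mp (mem_range.mp hm)
  rw [Nat.add_sub_cancel, Nat.sub_sub_self hmn, Nat.cast_sub hmn, ← cos_neg]
  congr 2
  ring

lemma sin_add_mul_sin_sub (x y : ℝ) : sin (x + y) * sin (x - y) = sin x ^ 2 - sin y ^ 2 := by
  rw [sin_add, sin_sub]
  linear_combination sin x ^ 2 * sin_sq_add_cos_sq y - sin y ^ 2 * sin_sq_add_cos_sq x

lemma sq_div_two_le_sin_mul_sin {u : ℝ × ℝ} (hu : u ∈ GammaT) :
    u.1 ^ 2 / 2 ≤ sin (π * (u.1 + u.2) / 2) * sin (π * (u.1 - u.2) / 2) := by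
  obtain ⟨h2, h23, h1, h11⟩ := hu
  rw [show π * (u.1 + u.2) / 2 = π * u.1 / 2 + π * u.2 / 2 by ring,
    show π * (u.1 - u.2) / 2 = π * u.1 / 2 - π * u.2 / 2 by ring, sin_add_mul_sin_sub]
  have hx : u.1 ≤ sin (π * u.1 / 2) := by
    convert mul_le_sin (x := π * u.1 / 2) (by positivity) (by nlinarith [pi_pos]) using 1
    field_simp
  have hy0 : 0 ≤ sin (π * u.2 / 2) :=
    sin_nonneg_of_nonneg_of_le_pi (by positivity) (by nlinarith [pi_pos])
  have hy : sin (π * u.2 / 2) ≤ 2 * u.1 / 3 :=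
    (sin_le (by positivity)).trans (by nlinarith [pi_pos, pi_lt_four])
  nlinarith

theorem stmt_10 :
    ∀ δ : ℝ, 0 < δ → δ < 1 → ∃ C : ℝ, 0 < C ∧
      ∀ n : ℕ, ∀ u : ℝ × ℝ, u ∈ GammaT → 0 < u.1 → 0 < u.2 →
        |(1 / cesaroA δ n) *
            ∑ k ∈ Finset.range (n + 1), cesaroA (δ - 1) (n - k) * Hstar1 k u| ≤
          C * (1 / u.1 ^ 2) *
            (1 / ((n + 1 : ℝ) ^ δ * u.2 ^ δ) + 1 / ((n + 1 : ℝ) * u.2)) := by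
  intro δ hδ0 hδ1
  refine ⟨3 / δ, by positivity, fun n u hu hu1 hu2 => ?_⟩
  set D := sin (π * (u.1 + u.2) / 2) * sin (π * (u.1 - u.2) / 2)
  have hD : u.1 ^ 2 / 2 ≤ D := sq_div_two_le_sin_mul_sin hu
  have hD0 : 0 < 2 * D := by linarith [pow_pos hu1 2]
  have hA : ((n : ℝ) + 1) ^ δ ≤ cesaroA δ n := rpow_le_cesaroA hδ0.le hδ1.le n
  have hS := abs_sum_cesaroA_rev_mul_cos_odd_le hδ0 hδ1.le hu2 (by linarith [hu.2.1, hu.2.2.2]) n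
  have hsum : ∑ k ∈ range (n + 1), cesaroA (δ - 1) (n - k) * Hstar1 k u =
      (∑ k ∈ range (n + 1), cesaroA (δ - 1) (n - k) * cos ((2 * k + 1) * π * u.2)) / (2 * D) := by
    rw [sum_div]
    exact sum_congr rfl fun k _ => by rw [Hstar1]; ring
  have hApos : 0 < cesaroA δ n := (rpow_pos_of_pos (by positivity) δ).trans_le hA
  rw [hsum, abs_mul, abs_div, abs_div, abs_one, abs_of_pos hApos, abs_of_pos hD0]
  calc 1 / cesaroA δ n * (|∑ k ∈ range (n + 1), cesaroA (δ - 1) (n - k) *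
        cos ((2 * k + 1) * π * u.2)| / (2 * D))
      ≤ 1 / ((n : ℝ) + 1) ^ δ * (3 / δ / u.2 ^ δ / u.1 ^ 2) :=
        mul_le_mul (one_div_le_one_div_of_le (by positivity) hA)
          (div_le_div₀ (by positivity) hS (by positivity) (by linarith))
          (div_nonneg (abs_nonneg _) hD0.le)
          (by positivity)
    _ = 3 / δ * (1 / u.1 ^ 2) * (1 / (((n : ℝ) + 1) ^ δ * u.2 ^ δ)) := by ring
    _ ≤ _ := by gcongr; exact le_add_of_nonneg_right (by positivity)
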